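/- arXiv:math/0306136 — 2 statements merged into one kernel-verified Lean document; each statement's English description precedes it below -/
import Mathlib

section
/- Let p be prime and H ∈ ℕ with base-p expansion digits H^(i). Suppose i < k and H^(i-1) ≠ 0 ≠ H^(k) but H^(j) = 0 for all i ≤ j < k. Then h₀ := the largest element of Λ(H) less than p^i satisfies h₀ ≤ p^i − 1, and h₁ := p^k is the smallest element of Λ(H) greater than p^i; moreover h₁ ≥ p·h₀, and [h₀, h₁) ∩ Λ(H) = {h₀}. -/
/-- `lucasSet p H` is `Λ(H)`: the set of `n ≤ H` all of whose base-`p` digits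
are at most the corresponding base-`p` digits of `H`. -/
def lucasSet (p H : ℕ) : Set ℕ :=
  {n | n ≤ H ∧ ∀ i : ℕ, n / p ^ i % p ≤ H / p ^ i % p}

/-- Pointwise digit dominance implies `≤`. -/
lemma dom_le_aux (p : ℕ) (hp : 2 ≤ p) :
    ∀ n m : ℕ, (∀ j, n / p ^ j % p ≤ m / p ^ j % p) → n ≤ m := by
  intro n
  induction n using Nat.strong_induction_on with
  | _ n ih =>
    intro m h
    rcases Nat.eq_zero_or_pos n with h0 | h0
    · simp [h0]
    have hq : n / p ≤ m / p := by
      refine ih (n / p) (Nat.div_lt_self h0 (by omega)) (m / p) (fun j => ?_)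
      have := h (j + 1)
      simpa [Nat.div_div_eq_div_mul, pow_succ, mul_comm] using this
    have h0' := h 0
    simp at h0'
    have hn := Nat.div_add_mod n p
    have hm := Nat.div_add_mod m p
    nlinarith [Nat.mul_le_mul_left p hq]

lemma mod_digit (p H i j : ℕ) (hp : 2 ≤ p) (hj : j < i) :
    (H % p ^ i) / p ^ j % p = H / p ^ j % p := by
  rw [← Nat.mod_mul_right_div_self, ← Nat.mod_mul_right_div_self,
    Nat.mod_mod_of_dvd]
  have : p ^ j * p = p ^ (j + 1) := (pow_succ p j).symm
  rw [this]
  exact pow_dvd_pow p hj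

/-- If `i` and `k` bracket a zero-block in the base-`p` expansion of `H`
(`H^(i-1) ≠ 0 ≠ H^(k)` and `H^(j) = 0` for `i ≤ j < k`), then the largest
element `h₀` of `Λ(H)` below `p^i` satisfies `h₀ ≤ p^i − 1`, the element
`h₁ := p^k` is the smallest element of `Λ(H)` greater than `p^i`, moreover
`h₁ ≥ p·h₀` and `[h₀, h₁) ∩ Λ(H) = {h₀}`. -/
theorem zero_block_gap (p H i k : ℕ) (hp : p.Prime) (hi : 0 < i) (hik : i < k)
    (hprev : H / p ^ (i - 1) % p ≠ 0) (hk : H / p ^ k % p ≠ 0)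
    (hzero : ∀ j, i ≤ j → j < k → H / p ^ j % p = 0) :
    ∃ h₀ ∈ lucasSet p H, h₀ < p ^ i ∧ h₀ ≤ p ^ i - 1 ∧
      (∀ n ∈ lucasSet p H, n < p ^ i → n ≤ h₀) ∧
      p ^ k ∈ lucasSet p H ∧
      (∀ n ∈ lucasSet p H, p ^ i < n → p ^ k ≤ n) ∧
      p * h₀ ≤ p ^ k ∧
      Set.Ico h₀ (p ^ k) ∩ lucasSet p H = {h₀} := by
  have hp2 : 2 ≤ p := hp.two_le
  have hppos : 0 < p := by omega
  set h₀ := H % p ^ i with hh₀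
  have hlt : h₀ < p ^ i := Nat.mod_lt _ (pow_pos hppos i)
  -- digits of h₀
  have hdig : ∀ j, h₀ / p ^ j % p = if j < i then H / p ^ j % p else 0 := by
    intro j
    split_ifs with hji
    · exact mod_digit p H i j hp2 hji
    · have : h₀ < p ^ j := lt_of_lt_of_le hlt (pow_le_pow_right₀ (by omega) (by omega))
      rw [Nat.div_eq_of_lt this]
      simp
  have h₀mem : h₀ ∈ lucasSet p H := by
    refine ⟨Nat.mod_le _ _, fun j => ?_⟩
    rw [hdig j]
    split_ifs <;> simp
  have hmax : ∀ n ∈ lucasSet p H, n < p ^ i → n ≤ h₀ := by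
    intro n hn hni
    refine dom_le_aux p hp2 n h₀ (fun j => ?_)
    rw [hdig j]
    split_ifs with hji
    · exact hn.2 j
    · have : n < p ^ j := lt_of_lt_of_le hni (pow_le_pow_right₀ (by omega) (by omega))
      rw [Nat.div_eq_of_lt this]
      simp
  have hpkH : p ^ k ≤ H := by
    by_contra hcon
    push_neg at hcon
    rw [Nat.div_eq_of_lt hcon] at hk
    simp at hk
  have hpkmem : p ^ k ∈ lucasSet p H := by
    refine ⟨hpkH, fun j => ?_⟩
    rcases lt_trichotomy j k with hjk | hjk | hjk
    · have h1 : p ^ k / p ^ j = p ^ (k - j) := Nat.pow_div (le_of_lt hjk) hppos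
      have hd : p ∣ p ^ (k - j) := dvd_pow_self p (by omega)
      have h2 : p ^ (k - j) % p = 0 := Nat.eq_zero_of_dvd_of_lt (Nat.dvd_mod_iff dvd_rfl |>.mpr hd) (Nat.mod_lt _ hppos)

      rw [h1, h2]
      exact Nat.zero_le _
    · subst hjk
      rw [Nat.div_self (pow_pos hppos j)]
      rw [Nat.mod_eq_of_lt (by omega)]
      omega
    · have : p ^ k < p ^ j := pow_lt_pow_right₀ (by omega) hjk
      rw [Nat.div_eq_of_lt this]
      simp
  have hmin : ∀ n ∈ lucasSet p H, p ^ i < n → p ^ k ≤ n := by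
    intro n hn hni
    by_contra hcon
    push_neg at hcon
    have hn0 : n ≠ 0 := by
      have := pow_pos hppos i
      omega
    set j := Nat.log p n with hj
    have hji : i ≤ j := Nat.le_log_of_pow_le (by omega) (le_of_lt hni)
    have hjk : j < k := Nat.log_lt_of_lt_pow hn0 hcon
    have hpow : p ^ j ≤ n := Nat.pow_log_le_self p hn0
    have hpow2 : n < p ^ (j + 1) := Nat.lt_pow_succ_log_self (by omega) n
    have hdj : n / p ^ j % p ≠ 0 := by
      have hdiv1 : 1 ≤ n / p ^ j := (Nat.one_le_div_iff (pow_pos hppos j)).mpr hpow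
      have hdivlt : n / p ^ j < p := by
        rw [Nat.div_lt_iff_lt_mul (pow_pos hppos j)]
        calc n < p ^ (j + 1) := hpow2
        _ = p * p ^ j := by ring
      rw [Nat.mod_eq_of_lt hdivlt]
      omega
    have := hn.2 j
    rw [hzero j hji hjk] at this
    omega
  refine ⟨h₀, h₀mem, hlt, by omega, hmax, hpkmem, hmin, ?_, ?_⟩
  · have h1 : p * h₀ < p * p ^ i := by
      exact (Nat.mul_lt_mul_left hppos).mpr hlt
    have h2 : p * p ^ i = p ^ (i + 1) := by ring
    have h3 : p ^ (i + 1) ≤ p ^ k := pow_le_pow_right₀ (by omega) (by omega)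
    omega
  · ext n
    simp only [Set.mem_inter_iff, Set.mem_Ico, Set.mem_singleton_iff]
    constructor
    · rintro ⟨⟨hn₀, hn₁⟩, hnΛ⟩
      rcases lt_trichotomy n (p ^ i) with hc | hc | hc
      · exact le_antisymm (hmax n hnΛ hc) hn₀
      · exfalso
        have := hnΛ.2 i
        rw [hc, Nat.div_self (pow_pos hppos i),
          Nat.mod_eq_of_lt (by omega), hzero i le_rfl hik] at this
        omega
      · exact absurd (hmin n hnΛ hc) (by omega)
    · rintro rfl
      exact ⟨⟨le_rfl, lt_of_lt_of_le hlt (pow_le_pow_right₀ (by omega) (by omega))⟩, h₀mem⟩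
end

section
/- Let p = 2 and for each n let rⁿ ∈ (Z/2)^Z be the 2^{n+1}-periodic sequence that is 0 on coordinates [0, 2ⁿ) and equals (rⁿ_0, …, rⁿ_{2ⁿ−1}) on [2ⁿ, 2^{n+1}) (extended periodically). Define a^∞ := Σ_{n≥0} rⁿ (coordinatewise, the sum is finite at each coordinate M ≥ 0). Then for any M ∈ ℕ with binary expansion M = Σ_n m_n 2ⁿ and partial sums M_n := Σ_{i<n} m_i 2^i, one has a^∞_M = Σ_n m_n · rⁿ_{M_n} (mod 2). -/
/-- The Toeplitz-like construction: for each `n`, `r n` is the `2^{n+1}`-periodic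
sequence in `(Z/2)^ℤ` vanishing on `[0,2ⁿ)` and equal to `(rv n 0, …, rv n (2ⁿ−1))`
on `[2ⁿ, 2^{n+1})`; `a M := Σ_{n ≤ M} r n M` is the coordinate `M` of the
infinite sum `a^∞ = Σ_n rⁿ`.  Then for any `M` with binary digits `m_n` and
partial sums `M_n = M mod 2ⁿ`, one has `a^∞_M = Σ_n m_n · rⁿ_{M_n}`. -/
theorem toeplitz_coordinate_formula (rv : ℕ → ℕ → ZMod 2)
    (r : ℕ → ℤ → ZMod 2)
    (hr : ∀ n (k : ℤ), r n k =
      if 2 ^ n ≤ (k % (2 ^ (n + 1) : ℤ)).toNat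
      then rv n ((k % (2 ^ (n + 1) : ℤ)).toNat - 2 ^ n) else 0)
    (a : ℕ → ZMod 2)
    (ha : ∀ M : ℕ, a M = ∑ n ∈ Finset.range (M + 1), r n (M : ℤ)) :
    ∀ M : ℕ, a M = ∑ n ∈ Finset.range (M + 1),
      (if M / 2 ^ n % 2 = 1 then rv n (M % 2 ^ n) else 0) := by
  intro M
  rw [ha]
  refine Finset.sum_congr rfl fun n _ => ?_
  rw [hr]
  have h1 : ((M : ℤ) % (2 ^ (n + 1) : ℤ)).toNat = M % 2 ^ (n + 1) := by
    rw [show ((2 : ℤ) ^ (n + 1)) = ((2 ^ (n + 1) : ℕ) : ℤ) by push_cast; ring,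
      ← Int.natCast_mod, Int.toNat_natCast]
  rw [h1]
  have key : M % 2 ^ (n + 1) = 2 ^ n * (M / 2 ^ n % 2) + M % 2 ^ n := by
    rw [pow_succ, Nat.mod_mul]; ring
  have hlt : M % 2 ^ n < 2 ^ n := Nat.mod_lt _ (by positivity)
  rcases Nat.mod_two_eq_zero_or_one (M / 2 ^ n) with h | h <;> rw [h] at key
  · rw [if_neg (by omega), if_neg (by omega)]
  · rw [if_pos (by omega), if_pos (by omega)]
    congr 1
    omega
end
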